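/- (Classical analogue, Theorem 5.) Let p₁,…,p_k be distinct points in ℝⁿ. A permutation π of {1,…,k} is an observable order if there exists x ∈ ℝⁿ with ‖x - p_{π(1)}‖ < ‖x - p_{π(2)}‖ < ⋯ < ‖x - p_{π(k)}‖. Then the number of observable orders equals the number of connected components of ℝⁿ ∖ ⋃_{i<j} C_{ij}, where C_{ij} = {x ∈ ℝⁿ : ⟪p_i - p_j, x⟫ = (‖p_i‖² - ‖p_j‖²)/2} is the perpendicular bisector hyperplane of p_i and p_j. -/
import Mathlib


open scoped InnerProductSpace

noncomputable section

/-- A permutation `π` is an observable order of the points `p 0, …, p (k-1)`: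
some observer at `x` perceives the flashes emitted by the points in the order
`π 0, π 1, …, π (k-1)`. -/
def ObservableOrder {n k : ℕ} (p : Fin k → EuclideanSpace ℝ (Fin n))
    (π : Equiv.Perm (Fin k)) : Prop :=
  ∃ x : EuclideanSpace ℝ (Fin n),
    StrictMono fun m : Fin k => ‖x - p (π m)‖

/-- The complement `ℝⁿ ∖ ⋃_{i<j} C_{ij}` of the union of the perpendicular
bisector hyperplanes `C_{ij} = {x : ⟪p i - p j, x⟫ = (‖p i‖² - ‖p j‖²)/2}`. -/
def bisectorComplement {n k : ℕ} (p : Fin k → EuclideanSpace ℝ (Fin n)) :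
    Set (EuclideanSpace ℝ (Fin n)) :=
  {x | ∀ i j : Fin k, i ≠ j → ⟪p i - p j, x⟫_ℝ ≠ (‖p i‖ ^ 2 - ‖p j‖ ^ 2) / 2}

/-- The connected components of the complement of the perpendicular bisectors. -/
def bisectorComponents {n k : ℕ} (p : Fin k → EuclideanSpace ℝ (Fin n)) :
    Set (Set (EuclideanSpace ℝ (Fin n))) :=
  {C | ∃ x ∈ bisectorComplement p, C = connectedComponentIn (bisectorComplement p) x}

namespace ObsAux

variable {n k : ℕ} {p : Fin k → EuclideanSpace ℝ (Fin n)}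

/-- Key algebraic identity relating the bisector functional to distances. -/
lemma key (x : EuclideanSpace ℝ (Fin n)) (i j : Fin k) :
    ⟪p i - p j, x⟫_ℝ - (‖p i‖ ^ 2 - ‖p j‖ ^ 2) / 2
      = (‖x - p j‖ ^ 2 - ‖x - p i‖ ^ 2) / 2 := by
  have h1 : ‖x - p i‖ ^ 2 = ‖x‖ ^ 2 - 2 * ⟪x, p i⟫_ℝ + ‖p i‖ ^ 2 := norm_sub_sq_real x (p i)
  have h2 : ‖x - p j‖ ^ 2 = ‖x‖ ^ 2 - 2 * ⟪x, p j⟫_ℝ + ‖p j‖ ^ 2 := norm_sub_sq_real x (p j)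
  have h3 : ⟪p i - p j, x⟫_ℝ = ⟪x, p i⟫_ℝ - ⟪x, p j⟫_ℝ := by
    rw [inner_sub_left, real_inner_comm (p i) x, real_inner_comm (p j) x]
  linarith

lemma lt_iff (x : EuclideanSpace ℝ (Fin n)) (i j : Fin k) :
    ‖x - p i‖ < ‖x - p j‖ ↔ (‖p i‖ ^ 2 - ‖p j‖ ^ 2) / 2 < ⟪p i - p j, x⟫_ℝ := by
  have hk := key (p := p) x i j
  have hsq : ‖x - p i‖ < ‖x - p j‖ ↔ ‖x - p i‖ ^ 2 < ‖x - p j‖ ^ 2 := by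
    constructor
    · intro h; nlinarith [norm_nonneg (x - p i), norm_nonneg (x - p j)]
    · intro h; nlinarith [norm_nonneg (x - p i), norm_nonneg (x - p j)]
  rw [hsq]; constructor <;> intro h <;> linarith

lemma eq_iff (x : EuclideanSpace ℝ (Fin n)) (i j : Fin k) :
    ‖x - p i‖ = ‖x - p j‖ ↔ ⟪p i - p j, x⟫_ℝ = (‖p i‖ ^ 2 - ‖p j‖ ^ 2) / 2 := by
  have hk := key (p := p) x i j
  have hsq : ‖x - p i‖ = ‖x - p j‖ ↔ ‖x - p i‖ ^ 2 = ‖x - p j‖ ^ 2 := by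
    constructor
    · intro h; rw [h]
    · intro h
      nlinarith [norm_nonneg (x - p i), norm_nonneg (x - p j)]
  rw [hsq]; constructor <;> intro h <;> linarith

lemma mem_iff (x : EuclideanSpace ℝ (Fin n)) :
    x ∈ bisectorComplement p ↔ ∀ i j : Fin k, i ≠ j → ‖x - p i‖ ≠ ‖x - p j‖ := by
  simp only [bisectorComplement, Set.mem_setOf_eq]
  constructor
  · intro h i j hij he; exact h i j hij ((eq_iff x i j).mp he)
  · intro h i j hij he; exact h i j hij ((eq_iff x i j).mpr he)

/-- Sign persistence on preconnected subsets of the complement. -/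
lemma ord_const {S : Set (EuclideanSpace ℝ (Fin n))} (hS : IsPreconnected S)
    (hSD : S ⊆ bisectorComplement p) {x y : EuclideanSpace ℝ (Fin n)}
    (hx : x ∈ S) (hy : y ∈ S) (i j : Fin k)
    (h : ‖x - p i‖ < ‖x - p j‖) : ‖y - p i‖ < ‖y - p j‖ := by
  rcases eq_or_ne i j with rfl | hij
  · exact absurd h (lt_irrefl _)
  by_contra hcon
  push_neg at hcon
  have hyne := (mem_iff y).mp (hSD hy) i j hij
  have hcon' : ‖y - p j‖ < ‖y - p i‖ := lt_of_le_of_ne hcon (Ne.symm hyne)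
  have hcf : ContinuousOn (fun z : EuclideanSpace ℝ (Fin n) => ‖z - p i‖) S :=
    ((continuous_id.sub continuous_const).norm).continuousOn
  have hcg : ContinuousOn (fun z : EuclideanSpace ℝ (Fin n) => ‖z - p j‖) S :=
    ((continuous_id.sub continuous_const).norm).continuousOn
  obtain ⟨z, hzS, hz⟩ :=
    hS.intermediate_value₂ hx hy hcf hcg h.le hcon'.le
  exact (mem_iff z).mp (hSD hzS) i j hij hz

/-- The open cell of the arrangement containing `x`. -/
def cell (p : Fin k → EuclideanSpace ℝ (Fin n)) (x : EuclideanSpace ℝ (Fin n)) :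
    Set (EuclideanSpace ℝ (Fin n)) :=
  {y | ∀ i j : Fin k, ‖x - p i‖ < ‖x - p j‖ → ‖y - p i‖ < ‖y - p j‖}

lemma mem_cell_self (x : EuclideanSpace ℝ (Fin n)) : x ∈ cell p x := fun _ _ h => h

lemma cell_convex (x : EuclideanSpace ℝ (Fin n)) : Convex ℝ (cell p x) := by
  have : cell p x =
      ⋂ (i : Fin k) (j : Fin k) (_ : ‖x - p i‖ < ‖x - p j‖),
        {y : EuclideanSpace ℝ (Fin n) | (‖p i‖ ^ 2 - ‖p j‖ ^ 2) / 2 < ⟪p i - p j, y⟫_ℝ} := by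
    ext y
    simp only [cell, Set.mem_setOf_eq, Set.mem_iInter]
    constructor
    · intro h i j hij; exact (lt_iff y i j).mp (h i j hij)
    · intro h i j hij; exact (lt_iff y i j).mpr (h i j hij)
  rw [this]
  refine convex_iInter fun i => convex_iInter fun j => convex_iInter fun _ => ?_
  exact convex_halfSpace_gt
    ⟨fun a b => inner_add_right _ _ _, fun c a => real_inner_smul_right _ _ _⟩ _

lemma cell_subset {x : EuclideanSpace ℝ (Fin n)} (hx : x ∈ bisectorComplement p) :
    cell p x ⊆ bisectorComplement p := by
  intro y hy
  rw [mem_iff]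
  intro i j hij
  rcases lt_trichotomy ‖x - p i‖ ‖x - p j‖ with h | h | h
  · exact ne_of_lt (hy i j h)
  · exact absurd h ((mem_iff x).mp hx i j hij)
  · exact ne_of_gt (hy j i h)

lemma comp_eq_iff {x y : EuclideanSpace ℝ (Fin n)} (hx : x ∈ bisectorComplement p)
    (hy : y ∈ bisectorComplement p) :
    connectedComponentIn (bisectorComplement p) x
        = connectedComponentIn (bisectorComplement p) y
      ↔ ∀ i j : Fin k, (‖x - p i‖ < ‖x - p j‖ ↔ ‖y - p i‖ < ‖y - p j‖) := by
  constructor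
  · intro h i j
    have hxm : x ∈ connectedComponentIn (bisectorComplement p) x := mem_connectedComponentIn hx
    have hym : y ∈ connectedComponentIn (bisectorComplement p) x := by
      rw [h]; exact mem_connectedComponentIn hy
    have hpre : IsPreconnected (connectedComponentIn (bisectorComplement p) x) :=
      isPreconnected_connectedComponentIn
    have hsub := connectedComponentIn_subset (bisectorComplement p) x
    exact ⟨ord_const hpre hsub hxm hym i j, ord_const hpre hsub hym hxm i j⟩
  · intro h
    have hyc : y ∈ cell p x := fun i j hij => (h i j).mp hij
    have hsub : cell p x ⊆ connectedComponentIn (bisectorComplement p) x :=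
      (cell_convex x).isPreconnected.subset_connectedComponentIn
        (mem_cell_self x) (cell_subset hx)
    exact connectedComponentIn_eq (hsub hyc)

/-- In the complement, there is a unique sorting permutation. -/
lemma exists_unique_sort {x : EuclideanSpace ℝ (Fin n)} (hx : x ∈ bisectorComplement p) :
    ∃! π : Equiv.Perm (Fin k), StrictMono fun m : Fin k => ‖x - p (π m)‖ := by
  set f : Fin k → ℝ := fun i => ‖x - p i‖ with hf
  have hinj : Function.Injective f := by
    intro i j hij
    by_contra hne
    exact (mem_iff x).mp hx i j hne hij
  refine ⟨Tuple.sort f, ?_, ?_⟩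
  · exact (Tuple.monotone_sort f).strictMono_of_injective
      (hinj.comp (Tuple.sort f).injective)
  · intro π hπ
    have hσ : StrictMono (f ∘ (Tuple.sort f)) :=
      (Tuple.monotone_sort f).strictMono_of_injective (hinj.comp (Tuple.sort f).injective)
    have hπ' : StrictMono (f ∘ π) := hπ
    have hrange : Set.range (f ∘ π) = Set.range (f ∘ (Tuple.sort f)) := by
      rw [Set.range_comp, Set.range_comp, π.surjective.range_eq,
        (Tuple.sort f).surjective.range_eq]
    haveI : WellFoundedLT (Fin k) := inferInstance
    have := (StrictMono.range_inj hπ' hσ).mp hrange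
    ext m
    exact congrArg Fin.val (hinj (congrFun this m))

lemma witness_mem {π : Equiv.Perm (Fin k)} {x : EuclideanSpace ℝ (Fin n)}
    (hx : StrictMono fun m : Fin k => ‖x - p (π m)‖) : x ∈ bisectorComplement p := by
  rw [mem_iff]
  intro i j hij he
  have h1 : π (π.symm i) = i := π.apply_symm_apply i
  have h2 : π (π.symm j) = j := π.apply_symm_apply j
  have : π.symm i ≠ π.symm j := fun h => hij (by rw [← h1, ← h2, h])
  apply this
  apply hx.injective
  simp only [h1, h2, he]

lemma witness_ordEq {π : Equiv.Perm (Fin k)} {x y : EuclideanSpace ℝ (Fin n)}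
    (hx : StrictMono fun m : Fin k => ‖x - p (π m)‖)
    (hy : StrictMono fun m : Fin k => ‖y - p (π m)‖) (i j : Fin k) :
    ‖x - p i‖ < ‖x - p j‖ ↔ ‖y - p i‖ < ‖y - p j‖ := by
  have h1 : π (π.symm i) = i := π.apply_symm_apply i
  have h2 : π (π.symm j) = j := π.apply_symm_apply j
  constructor
  · intro h
    have : π.symm i < π.symm j := by
      rw [← hx.lt_iff_lt]; simpa only [h1, h2] using h
    have := hy this
    simpa only [h1, h2] using this
  · intro h
    have : π.symm i < π.symm j := by
      rw [← hy.lt_iff_lt]; simpa only [h1, h2] using h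
    have := hx this
    simpa only [h1, h2] using this

end ObsAux

/-- **Theorem 5 (classical analogue).** For `k` distinct points in `ℝⁿ`, each
emitting a flash of light at time `0`, the number of observable orders equals
the number of connected components of the complement of the perpendicular
bisector hyperplanes. -/
theorem number_of_observable_orders_eq_number_of_regions
    (n k : ℕ) (p : Fin k → EuclideanSpace ℝ (Fin n))
    (hp : ∀ i j : Fin k, i ≠ j → p i ≠ p j) :
    Nat.card {π : Equiv.Perm (Fin k) // ObservableOrder p π}
      = Nat.card (bisectorComponents p) := by
  classical
  apply Nat.card_congr
  refine
    { toFun := fun π =>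
        ⟨connectedComponentIn (bisectorComplement p) π.2.choose,
          ⟨π.2.choose, ObsAux.witness_mem π.2.choose_spec, rfl⟩⟩
      invFun := fun C =>
        ⟨(ObsAux.exists_unique_sort (p := p) C.2.choose_spec.1).exists.choose,
          ⟨C.2.choose,
            (ObsAux.exists_unique_sort (p := p) C.2.choose_spec.1).exists.choose_spec⟩⟩
      left_inv := ?_
      right_inv := ?_ }
  · rintro ⟨π, hπ⟩
    apply Subtype.ext
    dsimp only
    -- notations
    set x := hπ.choose with hxdef
    have hxw : StrictMono fun m : Fin k => ‖x - p (π m)‖ := hπ.choose_spec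
    have hxD : x ∈ bisectorComplement p := ObsAux.witness_mem hxw
    set C : Set (EuclideanSpace ℝ (Fin n)) := connectedComponentIn (bisectorComplement p) x
    have hC : C ∈ bisectorComponents p := ⟨x, hxD, rfl⟩
    set x' := hC.choose with hx'def
    have hx'spec := hC.choose_spec
    have hx'D : x' ∈ bisectorComplement p := hx'spec.1
    have hcomp : connectedComponentIn (bisectorComplement p) x
        = connectedComponentIn (bisectorComplement p) x' := hx'spec.2
    have hord := (ObsAux.comp_eq_iff hxD hx'D).mp hcomp
    -- π is a sorting permutation for x'
    have hπx' : StrictMono fun m : Fin k => ‖x' - p (π m)‖ := by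
      intro a b hab
      exact (hord (π a) (π b)).mp (hxw hab)
    exact ((ObsAux.exists_unique_sort hx'D).unique
      (ObsAux.exists_unique_sort hx'D).exists.choose_spec hπx')
  · rintro ⟨C, hC⟩
    apply Subtype.ext
    dsimp only
    set x := hC.choose with hxdef
    have hxspec := hC.choose_spec
    have hxD : x ∈ bisectorComplement p := hxspec.1
    set π : Equiv.Perm (Fin k) := (ObsAux.exists_unique_sort (p := p) hxD).exists.choose
    have hπx : StrictMono fun m : Fin k => ‖x - p (π m)‖ :=
      (ObsAux.exists_unique_sort (p := p) hxD).exists.choose_spec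
    have hobs : ObservableOrder p π := ⟨x, hπx⟩
    set x'' := hobs.choose with hx''def
    have hπx'' : StrictMono fun m : Fin k => ‖x'' - p (π m)‖ := hobs.choose_spec
    have hx''D : x'' ∈ bisectorComplement p := ObsAux.witness_mem hπx''
    have hord := ObsAux.witness_ordEq hπx'' hπx
    have hcomp : connectedComponentIn (bisectorComplement p) x''
        = connectedComponentIn (bisectorComplement p) x :=
      (ObsAux.comp_eq_iff hx''D hxD).mpr hord
    rw [hcomp, ← hxspec.2]
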